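/- For every v ∈ ℝ one has the two identities σ_{f̄₁}(ḡ(v)) = ∫_K σ_{f₁}(g(v + V(y))) d𝔪(y) and h_{f̄₁}(ḡ(v)) = ∫_K h_{f₁}(g(v + V(y))) d𝔪(y); that is, the noise coefficient σ and the correction coefficient h associated with the homogenized flux f̄₁ are, after composition with ḡ, the 𝔪-averages of the corresponding coefficients associated with f₁. -/

import Mathlib

/-!
Both coefficients of a flux are derivatives of its inverse: if `ψ` is the inverse of `φ`, then
`σ_φ ∘ ψ = ψ'` and `h_φ ∘ ψ = ψ''`. Applied to `f₁` and to `f̄₁`, the claim becomes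
`ḡ' v = ∫ g'(v + V y) d𝔪` and `ḡ'' v = ∫ g''(v + V y) d𝔪`, which is differentiation under the
integral sign: `g'` and `g''` are bounded because `f₁' ≥ δ₀` and `f₁''` is bounded.
-/

open MeasureTheory Filter

-- `σ_φ` and `h_φ` of the paper
noncomputable def noiseCoeff (φ : ℝ → ℝ) (u : ℝ) : ℝ := 1 / deriv φ u

noncomputable def correctionCoeff (φ : ℝ → ℝ) (u : ℝ) : ℝ :=
  -(iteratedDeriv 2 φ u) / deriv φ u ^ 3

lemma iteratedDeriv_two_eq_deriv_deriv (f : ℝ → ℝ) : iteratedDeriv 2 f = deriv (deriv f) := by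
  rw [iteratedDeriv_succ, iteratedDeriv_one]

section Inverse

variable {φ ψ : ℝ → ℝ}

lemma Function.RightInverse.continuous_of_strictMono (hψ : StrictMono ψ)
    (h : Function.RightInverse φ ψ) : Continuous φ :=
  Monotone.continuous_of_surjective (fun a b hab => hψ.le_iff_le.mp (by rwa [h a, h b]))
    fun x => ⟨ψ x, h.leftInverse_of_injective hψ.injective x⟩

lemma hasDerivAt_of_rightInverse (hψ : Differentiable ℝ ψ) (hψ' : ∀ x, 0 < deriv ψ x)
    (h : Function.RightInverse φ ψ) (w : ℝ) : HasDerivAt φ (deriv ψ (φ w))⁻¹ w :=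
  .of_local_left_inverse (h.continuous_of_strictMono (strictMono_of_deriv_pos hψ')).continuousAt
    (hψ _).hasDerivAt (hψ' _).ne' (Eventually.of_forall h)

lemma deriv_of_rightInverse (hψ : Differentiable ℝ ψ) (hψ' : ∀ x, 0 < deriv ψ x)
    (h : Function.RightInverse φ ψ) : deriv φ = fun w => (deriv ψ (φ w))⁻¹ :=
  funext fun w => (hasDerivAt_of_rightInverse hψ hψ' h w).deriv

lemma differentiable_of_rightInverse (hψ : Differentiable ℝ ψ) (hψ' : ∀ x, 0 < deriv ψ x)
    (h : Function.RightInverse φ ψ) : Differentiable ℝ φ :=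
  fun w => (hasDerivAt_of_rightInverse hψ hψ' h w).differentiableAt

lemma differentiable_deriv_of_rightInverse (hψ : Differentiable ℝ ψ) (hψ' : ∀ x, 0 < deriv ψ x)
    (hψ'' : Differentiable ℝ (deriv ψ)) (h : Function.RightInverse φ ψ) :
    Differentiable ℝ (deriv φ) := by
  rw [deriv_of_rightInverse hψ hψ' h]
  exact (hψ''.comp (differentiable_of_rightInverse hψ hψ' h)).inv fun w => (hψ' _).ne'

lemma noiseCoeff_of_rightInverse (hψ : Differentiable ℝ ψ) (hψ' : ∀ x, 0 < deriv ψ x)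
    (h : Function.RightInverse φ ψ) (v : ℝ) : noiseCoeff φ (ψ v) = deriv ψ v := by
  have hφψ : φ (ψ v) = v := h.leftInverse_of_injective (strictMono_of_deriv_pos hψ').injective v
  rw [noiseCoeff, (hasDerivAt_of_rightInverse hψ hψ' h (ψ v)).deriv, hφψ, one_div, inv_inv]

lemma correctionCoeff_of_rightInverse (hψ : Differentiable ℝ ψ) (hψ' : ∀ x, 0 < deriv ψ x)
    (hψ'' : Differentiable ℝ (deriv ψ)) (h : Function.RightInverse φ ψ) (v : ℝ) :
    correctionCoeff φ (ψ v) = iteratedDeriv 2 ψ v := by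
  have hφψ : φ (ψ v) = v := h.leftInverse_of_injective (strictMono_of_deriv_pos hψ').injective v
  have hφ'' :
      HasDerivAt (deriv φ) (-(deriv (deriv ψ) v * (deriv ψ v)⁻¹) / deriv ψ v ^ 2) (ψ v) := by
    have hcomp :
        HasDerivAt (fun w => deriv ψ (φ w)) (deriv (deriv ψ) v * (deriv ψ v)⁻¹) (ψ v) := by
      have := (hψ'' (φ (ψ v))).hasDerivAt.comp (ψ v) (hasDerivAt_of_rightInverse hψ hψ' h (ψ v))
      rwa [hφψ] at this
    rw [deriv_of_rightInverse hψ hψ' h]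
    simpa only [hφψ] using hcomp.fun_inv (by rw [hφψ]; exact (hψ' v).ne')
  have hψ'v := (hψ' v).ne'
  rw [correctionCoeff, iteratedDeriv_two_eq_deriv_deriv, iteratedDeriv_two_eq_deriv_deriv,
    hφ''.deriv, deriv_of_rightInverse hψ hψ' h]
  beta_reduce
  rw [hφψ]
  field_simp

lemma deriv_le_inv_of_rightInverse {δ : ℝ} (hψ : Differentiable ℝ ψ) (hδ : 0 < δ)
    (hψδ : ∀ x, δ ≤ deriv ψ x) (h : Function.RightInverse φ ψ) (w : ℝ) : deriv φ w ≤ δ⁻¹ := by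
  have hψ' : ∀ x, 0 < deriv ψ x := fun x => hδ.trans_le (hψδ x)
  rw [deriv_of_rightInverse hψ hψ' h]
  exact inv_anti₀ hδ (hψδ _)

lemma inv_le_deriv_of_rightInverse {L : ℝ} (hψ : Differentiable ℝ ψ) (hψ' : ∀ x, 0 < deriv ψ x)
    (hψL : ∀ x, deriv ψ x ≤ L) (h : Function.RightInverse φ ψ) (w : ℝ) : L⁻¹ ≤ deriv φ w := by
  rw [deriv_of_rightInverse hψ hψ' h]
  exact inv_anti₀ (hψ' _) (hψL _)

end Inverse

lemma abs_correctionCoeff_le {φ : ℝ → ℝ} {δ C : ℝ} (hδ : 0 < δ) (hφ' : ∀ u, δ ≤ deriv φ u)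
    (hφ'' : ∀ u, |iteratedDeriv 2 φ u| ≤ C) (u : ℝ) : |correctionCoeff φ u| ≤ C / δ ^ 3 := by
  have hpos : 0 < deriv φ u := hδ.trans_le (hφ' u)
  rw [correctionCoeff, abs_div, abs_neg, abs_pow, abs_of_pos hpos]
  exact div_le_div₀ ((abs_nonneg _).trans (hφ'' u)) (hφ'' u) (by positivity)
    (pow_le_pow_left₀ hδ.le (hφ' u) 3)

section Average

variable {K : Type*} [MeasurableSpace K] {μ : Measure K} {V : K → ℝ} {CV : ℝ} {F : ℝ → ℝ}

lemma integrable_comp_add [IsFiniteMeasure μ] (hV : Measurable V) (hVbd : ∀ y, |V y| ≤ CV)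
    (hF : Continuous F) (v : ℝ) : Integrable (fun y => F (v + V y)) μ := by
  obtain ⟨C, hC⟩ := (isCompact_Icc (a := v - CV) (b := v + CV)).exists_bound_of_continuousOn
    hF.continuousOn
  refine .of_bound (hF.measurable.comp (measurable_const.add hV)).aestronglyMeasurable C
    (Eventually.of_forall fun y => hC _ ?_)
  have := abs_le.mp (hVbd y)
  constructor <;> linarith

lemma hasDerivAt_integral_comp_add [IsFiniteMeasure μ] (hV : Measurable V)
    (hVbd : ∀ y, |V y| ≤ CV) (hF : Differentiable ℝ F) {C : ℝ} (hF' : ∀ x, |deriv F x| ≤ C)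
    (v : ℝ) : HasDerivAt (fun v => ∫ y, F (v + V y) ∂μ) (∫ y, deriv F (v + V y) ∂μ) v :=
  (hasDerivAt_integral_of_dominated_loc_of_deriv_le (bound := fun _ => C) univ_mem
    (Eventually.of_forall fun x => (integrable_comp_add hV hVbd hF.continuous x).1)
    (integrable_comp_add hV hVbd hF.continuous v)
    ((measurable_deriv F).comp (measurable_const.add hV)).aestronglyMeasurable
    (Eventually.of_forall fun y x _ => hF' (x + V y)) (integrable_const C)
    (Eventually.of_forall fun y x _ => (hF (x + V y)).hasDerivAt.comp_add_const x (V y))).2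

lemma differentiable_integral_comp_add [IsFiniteMeasure μ] (hV : Measurable V)
    (hVbd : ∀ y, |V y| ≤ CV) (hF : Differentiable ℝ F) {C : ℝ} (hF' : ∀ x, |deriv F x| ≤ C) :
    Differentiable ℝ (fun v => ∫ y, F (v + V y) ∂μ) :=
  fun v => (hasDerivAt_integral_comp_add hV hVbd hF hF' v).differentiableAt

lemma deriv_integral_comp_add [IsFiniteMeasure μ] (hV : Measurable V) (hVbd : ∀ y, |V y| ≤ CV)
    (hF : Differentiable ℝ F) {C : ℝ} (hF' : ∀ x, |deriv F x| ≤ C) :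
    deriv (fun v => ∫ y, F (v + V y) ∂μ) = fun v => ∫ y, deriv F (v + V y) ∂μ :=
  funext fun v => (hasDerivAt_integral_comp_add hV hVbd hF hF' v).deriv

lemma le_integral_comp_add [IsProbabilityMeasure μ] (hV : Measurable V) (hVbd : ∀ y, |V y| ≤ CV)
    (hF : Continuous F) {c : ℝ} (hc : ∀ x, c ≤ F x) (v : ℝ) : c ≤ ∫ y, F (v + V y) ∂μ := by
  simpa using
    integral_mono (integrable_const (μ := μ) c) (integrable_comp_add hV hVbd hF v) fun y => hc _

variable {C₁ C₂ : ℝ}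

lemma differentiable_deriv_integral_comp_add [IsFiniteMeasure μ] (hV : Measurable V)
    (hVbd : ∀ y, |V y| ≤ CV) (hF : Differentiable ℝ F) (hF' : ∀ x, |deriv F x| ≤ C₁)
    (hF'd : Differentiable ℝ (deriv F)) (hF'' : ∀ x, |deriv (deriv F) x| ≤ C₂) :
    Differentiable ℝ (deriv fun v => ∫ y, F (v + V y) ∂μ) := by
  rw [deriv_integral_comp_add hV hVbd hF hF']
  exact differentiable_integral_comp_add hV hVbd hF'd hF''

lemma iteratedDeriv_two_integral_comp_add [IsFiniteMeasure μ] (hV : Measurable V)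
    (hVbd : ∀ y, |V y| ≤ CV) (hF : Differentiable ℝ F) (hF' : ∀ x, |deriv F x| ≤ C₁)
    (hF'd : Differentiable ℝ (deriv F)) (hF'' : ∀ x, |deriv (deriv F) x| ≤ C₂) :
    iteratedDeriv 2 (fun v => ∫ y, F (v + V y) ∂μ) =
      fun v => ∫ y, iteratedDeriv 2 F (v + V y) ∂μ := by
  rw [iteratedDeriv_two_eq_deriv_deriv, deriv_integral_comp_add hV hVbd hF hF',
    iteratedDeriv_two_eq_deriv_deriv]
  exact deriv_integral_comp_add hV hVbd hF'd hF''

end Average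

theorem stmt_2_general
    (δ₀ L : ℝ) (hδ₀ : 0 < δ₀) (hδL : δ₀ ≤ L)
    (f₁ : ℝ → ℝ) (hf₁ : ContDiff ℝ 3 f₁)
    (hf₁lb : ∀ u, δ₀ ≤ deriv f₁ u) (hf₁ub : ∀ u, deriv f₁ u ≤ L)
    (C₂ : ℝ)
    (hf₁'' : ∀ u, |iteratedDeriv 2 f₁ u| ≤ C₂)
    (K : Type*) [MeasurableSpace K] (𝔪 : Measure K) [IsProbabilityMeasure 𝔪]
    (V : K → ℝ) (hV : Measurable V) (CV : ℝ) (hVbd : ∀ y, |V y| ≤ CV)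
    (g : ℝ → ℝ) (hg₁ : Function.LeftInverse g f₁) (hg₂ : Function.RightInverse g f₁)
    (gbar : ℝ → ℝ) (hgbar : ∀ v, gbar v = ∫ y, g (v + V y) ∂𝔪)
    (fbar₁ : ℝ → ℝ)
    (hfb₂ : Function.RightInverse fbar₁ gbar) :
    ∀ v : ℝ,
      (1 / deriv fbar₁ (gbar v) = ∫ y, 1 / deriv f₁ (g (v + V y)) ∂𝔪) ∧
      (-(iteratedDeriv 2 fbar₁ (gbar v)) / (deriv fbar₁ (gbar v)) ^ 3 =
        ∫ y, -(iteratedDeriv 2 f₁ (g (v + V y))) / (deriv f₁ (g (v + V y))) ^ 3 ∂𝔪) := by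
  have hLinv : 0 < L⁻¹ := inv_pos.mpr (hδ₀.trans_le hδL)
  have hf₁d : Differentiable ℝ f₁ := hf₁.differentiable (by norm_num)
  have hf₁dd : Differentiable ℝ (deriv f₁) := by
    simpa [iteratedDeriv_one] using hf₁.differentiable_iteratedDeriv 1 (by norm_num)
  have hf₁pos : ∀ u, 0 < deriv f₁ u := fun u => hδ₀.trans_le (hf₁lb u)
  have hgd : Differentiable ℝ g := differentiable_of_rightInverse hf₁d hf₁pos hg₂
  have hgdd : Differentiable ℝ (deriv g) :=
    differentiable_deriv_of_rightInverse hf₁d hf₁pos hf₁dd hg₂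
  have hg'L : ∀ w, L⁻¹ ≤ deriv g w := inv_le_deriv_of_rightInverse hf₁d hf₁pos hf₁ub hg₂
  have hgpos : ∀ w, 0 < deriv g w := fun w => hLinv.trans_le (hg'L w)
  have hg'bd : ∀ w, |deriv g w| ≤ δ₀⁻¹ := fun w => by
    rw [abs_of_pos (hgpos w)]; exact deriv_le_inv_of_rightInverse hf₁d hδ₀ hf₁lb hg₂ w
  have hg''bd : ∀ w, |deriv (deriv g) w| ≤ C₂ / δ₀ ^ 3 := fun w => by
    rw [← iteratedDeriv_two_eq_deriv_deriv, ← correctionCoeff_of_rightInverse hgd hgpos hgdd hg₁]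
    exact abs_correctionCoeff_le hδ₀ hf₁lb hf₁'' _
  obtain rfl : gbar = fun v => ∫ y, g (v + V y) ∂𝔪 := funext hgbar
  have hgbar' := deriv_integral_comp_add (μ := 𝔪) hV hVbd hgd hg'bd
  have hgbard := differentiable_integral_comp_add (μ := 𝔪) hV hVbd hgd hg'bd
  have hgbardd := differentiable_deriv_integral_comp_add (μ := 𝔪) hV hVbd hgd hg'bd hgdd hg''bd
  have hgbarpos : ∀ v, 0 < deriv (fun v => ∫ y, g (v + V y) ∂𝔪) v := fun v =>
    hLinv.trans_le (hgbar' ▸ le_integral_comp_add hV hVbd hgdd.continuous hg'L v)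
  intro v
  change noiseCoeff fbar₁ _ = ∫ y, noiseCoeff f₁ (g (v + V y)) ∂𝔪 ∧
    correctionCoeff fbar₁ _ = ∫ y, correctionCoeff f₁ (g (v + V y)) ∂𝔪
  simp only [noiseCoeff_of_rightInverse hgd hgpos hg₁,
    noiseCoeff_of_rightInverse hgbard hgbarpos hfb₂, hgbar',
    correctionCoeff_of_rightInverse hgd hgpos hgdd hg₁,
    correctionCoeff_of_rightInverse hgbard hgbarpos hgbardd hfb₂,
    iteratedDeriv_two_integral_comp_add hV hVbd hgd hg'bd hgdd hg''bd, and_self]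

/-- With `σ_φ = 1/φ'` and `h_φ = -φ''/(φ')³`, one has, for every `v`,
`σ_{f̄₁}(ḡ(v)) = ∫_K σ_{f₁}(g(v+V y)) d𝔪(y)` and
`h_{f̄₁}(ḡ(v)) = ∫_K h_{f₁}(g(v+V y)) d𝔪(y)`. -/
theorem stmt_2
    (δ₀ L : ℝ) (hδ₀ : 0 < δ₀) (hδL : δ₀ ≤ L)
    (f₁ : ℝ → ℝ) (hf₁ : ContDiff ℝ 3 f₁)
    (hf₁lb : ∀ u, δ₀ ≤ deriv f₁ u) (hf₁ub : ∀ u, deriv f₁ u ≤ L)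
    (C₂ C₃ : ℝ)
    (hf₁'' : ∀ u, |iteratedDeriv 2 f₁ u| ≤ C₂)
    (hf₁''' : ∀ u, |iteratedDeriv 3 f₁ u| ≤ C₃)
    (K : Type*) [MeasurableSpace K] (𝔪 : Measure K) [IsProbabilityMeasure 𝔪]
    (V : K → ℝ) (hV : Measurable V) (CV : ℝ) (hVbd : ∀ y, |V y| ≤ CV)
    (g : ℝ → ℝ) (hg₁ : Function.LeftInverse g f₁) (hg₂ : Function.RightInverse g f₁)
    (gbar : ℝ → ℝ) (hgbar : ∀ v, gbar v = ∫ y, g (v + V y) ∂𝔪)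
    (fbar₁ : ℝ → ℝ) (hfb₁ : Function.LeftInverse fbar₁ gbar)
    (hfb₂ : Function.RightInverse fbar₁ gbar) :
    ∀ v : ℝ,
      (1 / deriv fbar₁ (gbar v) = ∫ y, 1 / deriv f₁ (g (v + V y)) ∂𝔪) ∧
      (-(iteratedDeriv 2 fbar₁ (gbar v)) / (deriv fbar₁ (gbar v)) ^ 3 =
        ∫ y, -(iteratedDeriv 2 f₁ (g (v + V y))) / (deriv f₁ (g (v + V y))) ^ 3 ∂𝔪) :=
  stmt_2_general δ₀ L hδ₀ hδL f₁ hf₁ hf₁lb hf₁ub C₂ hf₁'' K 𝔪 V hV CV hVbd g hg₁ hg₂ gbar hgbar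
    fbar₁ hfb₂
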